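/- arXiv:0810.3844 — 4 statements merged into one kernel-verified Lean document; each statement's English description precedes it below -/
import Mathlib

section
/- If z = z(x,y) is a C² function on a domain in the plane with positive Gaussian curvature (i.e., z_{xx} z_{yy} − z_{xy}² > 0), and ζ(x,y) is a C² function satisfying the infinitesimal bending equation z_{xx} ζ_{yy} − 2 z_{xy} ζ_{xy} + z_{yy} ζ_{xx} = 0, then the Hessian determinant of ζ is nonpositive: ζ_{xx} ζ_{yy} − ζ_{xy}² ≤ 0. -/
/-- Partial derivative in the first variable. -/
noncomputable def pdx (f : ℝ → ℝ → ℝ) (x y : ℝ) : ℝ := deriv (fun t => f t y) x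

/-- Partial derivative in the second variable. -/
noncomputable def pdy (f : ℝ → ℝ → ℝ) (x y : ℝ) : ℝ := deriv (fun t => f x t) y

lemma aux_alg (a b c A B C : ℝ) (h1 : 0 < a * c - b ^ 2)
    (h2 : a * C - 2 * b * B + c * A = 0) : A * C - B ^ 2 ≤ 0 := by
  by_contra h
  push_neg at h
  have hAC : 0 < A * C := lt_of_le_of_lt (sq_nonneg B) (by linarith)
  have h3 : a * C + c * A = 2 * b * B := by linarith
  have h4 : (a * C + c * A) ^ 2 ≥ 4 * (a * c) * (A * C) := by
    nlinarith [sq_nonneg (a * C - c * A)]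
  have h5 : a * c * (A * C) > b ^ 2 * B ^ 2 := by
    nlinarith [mul_pos h1 hAC, mul_nonneg (sq_nonneg b) (le_of_lt h)]
  rw [h3] at h4
  nlinarith [h4, h5]

/-- If `z` is a `C²` function with positive Hessian determinant (positive Gauss
curvature) on a domain `G`, and `ζ` is a `C²` solution of the infinitesimal
bending equation `z_xx ζ_yy - 2 z_xy ζ_xy + z_yy ζ_xx = 0` on `G`, then the
Hessian determinant of `ζ` is nonpositive on `G`. -/
theorem bending_field_hessian_nonpos (G : Set (ℝ × ℝ)) (hG : IsOpen G)
    (z ζ : ℝ → ℝ → ℝ)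
    (hz : ContDiffOn ℝ 2 (Function.uncurry z) G)
    (hζ : ContDiffOn ℝ 2 (Function.uncurry ζ) G)
    (hK : ∀ p ∈ G,
      0 < pdx (pdx z) p.1 p.2 * pdy (pdy z) p.1 p.2 - (pdy (pdx z) p.1 p.2) ^ 2)
    (hbend : ∀ p ∈ G,
      pdx (pdx z) p.1 p.2 * pdy (pdy ζ) p.1 p.2
        - 2 * pdy (pdx z) p.1 p.2 * pdy (pdx ζ) p.1 p.2
        + pdy (pdy z) p.1 p.2 * pdx (pdx ζ) p.1 p.2 = 0) :
    ∀ p ∈ G,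
      pdx (pdx ζ) p.1 p.2 * pdy (pdy ζ) p.1 p.2 - (pdy (pdx ζ) p.1 p.2) ^ 2 ≤ 0 := by
  intro p hp
  exact aux_alg _ _ _ _ _ _ (hK p hp) (hbend p hp)
end

section
/- If z : G → ℝ is a C² convex function on an open set G ⊆ ℝⁿ, then for every Borel set m ⊆ G, the Lebesgue measure of the gradient image ∇z(m) equals ∫_m det(D²z(x)) dx. -/
/-!
The gradient `g = ∇z` of a convex function is a monotone operator, `⟪g x - g y, x - y⟫ ≥ 0`.
Differentiating along lines, monotonicity makes the Hessian `Dg` positive semidefinite (it is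
symmetric since `z` is `C²`), so `det Dg ≥ 0`; and if `g x = g y` with `x ≠ y`, then
`t ↦ ⟪g (x + t (y - x)), y - x⟫` is monotone on `[0, 1]` with equal end values, hence constant,
so `⟪Dg(x) (y - x), y - x⟫ = 0` and `det Dg(x) = 0`. Thus `g` is injective off its critical set,
whose image is Lebesgue-null, and the change of variables formula applies to the rest.
-/

open MeasureTheory Set Filter InnerProductSpace

namespace LinearMap.IsPositive

variable {E : Type*} [NormedAddCommGroup E] [InnerProductSpace ℝ E] {T : E →ₗ[ℝ] E}

theorem det_nonneg [FiniteDimensional ℝ E] (hT : T.IsPositive) : 0 ≤ LinearMap.det T := by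
  rw [← LinearMap.det_toMatrix (stdOrthonormalBasis ℝ E).toBasis]
  exact ((posSemidef_toMatrix_iff _).2 hT).det_nonneg

theorem apply_eq_zero_of_inner_self_eq_zero (hT : T.IsPositive) {v : E}
    (hv : ⟪T v, v⟫_ℝ = 0) : T v = 0 := by
  -- The quadratic `t ↦ ⟪T (v - t • T v), v - t • T v⟫` is nonnegative, so its discriminant
  -- `4 ‖T v‖⁴` is not positive.
  have hquad : ∀ t : ℝ, 0 ≤ ⟪T (T v), T v⟫_ℝ * (t * t) + -2 * ‖T v‖ ^ 2 * t + 0 := by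
    intro t
    have := hT.inner_nonneg_left (v - t • T v)
    rw [map_sub, map_smul, inner_sub_left, inner_sub_right, inner_sub_right, real_inner_smul_left,
      real_inner_smul_right, real_inner_smul_left, real_inner_smul_right, hv,
      hT.isSymmetric (T v) v, real_inner_self_eq_norm_sq] at this
    linarith
  simpa [discrim] using discrim_le_zero hquad

theorem det_eq_zero_of_inner_self_eq_zero [FiniteDimensional ℝ E] (hT : T.IsPositive) {v : E}
    (hv₀ : v ≠ 0) (hv : ⟪T v, v⟫_ℝ = 0) : LinearMap.det T = 0 :=
  LinearMap.det_eq_zero_iff_ker_ne_bot.2 <|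
    (Submodule.ne_bot_iff _).2 ⟨v, hT.apply_eq_zero_of_inner_self_eq_zero hv, hv₀⟩

end LinearMap.IsPositive

section MonotoneOperator

variable {E : Type*} [NormedAddCommGroup E] [InnerProductSpace ℝ E]

def IsMonotoneOperatorOn (g : E → E) (s : Set E) : Prop :=
  ∀ x ∈ s, ∀ y ∈ s, 0 ≤ ⟪g x - g y, x - y⟫_ℝ

variable {g : E → E} {g' : E →L[ℝ] E} {s : Set E} {x : E}

theorem IsMonotoneOperatorOn.monotoneOn_inner_apply_add_smul (hg : IsMonotoneOperatorOn g s)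
    (x v : E) : MonotoneOn (fun t : ℝ ↦ ⟪g (x + t • v), v⟫_ℝ) {t | x + t • v ∈ s} := by
  intro a ha b hb hab
  rcases hab.eq_or_lt with rfl | hab
  · rfl
  have key := hg _ hb _ ha
  rw [show x + b • v - (x + a • v) = (b - a) • v by module, real_inner_smul_right,
    inner_sub_left] at key
  linarith [nonneg_of_mul_nonneg_right key (sub_pos.2 hab)]

theorem HasFDerivAt.hasDerivAt_inner_apply_add_smul (hg : HasFDerivAt g g' x) (v : E) :
    HasDerivAt (fun t : ℝ ↦ ⟪g (x + t • v), v⟫_ℝ) ⟪g' v, v⟫_ℝ 0 := by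
  have hline : HasDerivAt (fun t : ℝ ↦ x + t • v) v 0 := by
    simpa using ((hasDerivAt_id (0 : ℝ)).smul_const v).const_add x
  simpa using (hg.comp_hasDerivAt_of_eq 0 hline (by simp)).inner ℝ (hasDerivAt_const 0 v)

theorem IsMonotoneOperatorOn.inner_apply_self_nonneg (hg : IsMonotoneOperatorOn g s)
    (hs : IsOpen s) (hx : x ∈ s) (hg' : HasFDerivAt g g' x) (v : E) : 0 ≤ ⟪g' v, v⟫_ℝ := by
  have hopen : IsOpen {t : ℝ | x + t • v ∈ s} := hs.preimage (by fun_prop)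
  exact (hg'.hasDerivAt_inner_apply_add_smul v).hasDerivWithinAt.nonneg_of_monotoneOn
    (hopen.preperfect 0 (by simpa using hx)) (hg.monotoneOn_inner_apply_add_smul x v)

theorem IsMonotoneOperatorOn.inner_apply_sub_self_eq_zero (hg : IsMonotoneOperatorOn g s)
    (hs : Convex ℝ s) {y : E} (hx : x ∈ s) (hy : y ∈ s) (hxy : g x = g y)
    (hg' : HasFDerivAt g g' x) : ⟪g' (y - x), y - x⟫_ℝ = 0 := by
  set φ := fun t : ℝ ↦ ⟪g (x + t • (y - x)), y - x⟫_ℝ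
  have hseg : Icc (0 : ℝ) 1 ⊆ {t | x + t • (y - x) ∈ s} := fun t ht ↦
    hs.add_smul_sub_mem hx hy ht
  have hmono : MonotoneOn φ (Icc 0 1) := (hg.monotoneOn_inner_apply_add_smul x _).mono hseg
  have hconst : ∀ t ∈ Icc (0 : ℝ) 1, φ t = φ 0 := by
    have hends : φ 1 = φ 0 := by simp [φ, hxy]
    intro t ht
    exact le_antisymm (hends ▸ hmono ht (right_mem_Icc.2 zero_le_one) ht.2)
      (hmono (left_mem_Icc.2 zero_le_one) ht ht.1)
  have hanti : AntitoneOn φ (Icc 0 1) := fun a ha b hb _ ↦ by rw [hconst a ha, hconst b hb]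
  have hacc : AccPt (0 : ℝ) (𝓟 (Icc 0 1)) :=
    isPreconnected_Icc.preperfect_of_nontrivial ⟨0, by simp, 1, by simp, zero_ne_one⟩ 0
      (left_mem_Icc.2 zero_le_one)
  have hderiv := (hg'.hasDerivAt_inner_apply_add_smul (y - x)).hasDerivWithinAt (s := Icc 0 1)
  exact le_antisymm (hderiv.nonpos_of_antitoneOn hacc hanti)
    (hderiv.nonneg_of_monotoneOn hacc hmono)

end MonotoneOperator

section Gradient

variable {E : Type*} [NormedAddCommGroup E] [InnerProductSpace ℝ E] [CompleteSpace E]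
  {f : E → ℝ} {s : Set E} {x : E}

theorem ConvexOn.isMonotoneOperatorOn_gradient (hf : ConvexOn ℝ s f)
    (hd : ∀ x ∈ s, DifferentiableAt ℝ f x) : IsMonotoneOperatorOn (gradient f) s := by
  intro y hy x hx
  set L : ℝ →ᵃ[ℝ] E := AffineMap.lineMap x y
  have hderiv : ∀ t ∈ L ⁻¹' s, HasDerivAt (f ∘ L) ⟪gradient f (L t), y - x⟫_ℝ t := fun t ht ↦ by
    simpa using (hd _ ht).hasGradientAt.hasFDerivAt.comp_hasDerivAt t AffineMap.hasDerivAt_lineMap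
  have h₀ : (0 : ℝ) ∈ L ⁻¹' s := by simpa [L] using hx
  have h₁ : (1 : ℝ) ∈ L ⁻¹' s := by simpa [L] using hy
  have hmono := (hf.comp_affineMap L).monotoneOn_deriv
    (fun t ht ↦ (hderiv t ht).differentiableAt) h₀ h₁ zero_le_one
  rw [(hderiv 0 h₀).deriv, (hderiv 1 h₁).deriv] at hmono
  simp only [L, AffineMap.lineMap_apply_zero, AffineMap.lineMap_apply_one] at hmono
  rw [inner_sub_left]
  linarith

theorem inner_fderiv_gradient_apply (f : E → ℝ) (x v w : E) :
    ⟪fderiv ℝ (gradient f) x v, w⟫_ℝ = fderiv ℝ (fderiv ℝ f) x v w := by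
  have : gradient f = (toDual ℝ E).symm ∘ fderiv ℝ f := rfl
  rw [this, LinearIsometryEquiv.comp_fderiv]
  exact toDual_symm_apply

theorem ContDiffAt.isSymmetric_fderiv_gradient (hf : ContDiffAt ℝ 2 f x) :
    (fderiv ℝ (gradient f) x : E →ₗ[ℝ] E).IsSymmetric := fun v w ↦ by
  rw [ContinuousLinearMap.coe_coe, ← real_inner_comm v, inner_fderiv_gradient_apply,
    inner_fderiv_gradient_apply, hf.isSymmSndFDerivAt (by simp)]

theorem ContDiffAt.hasFDerivAt_gradient (hf : ContDiffAt ℝ 2 f x) :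
    HasFDerivAt (gradient f) (fderiv ℝ (gradient f) x) x := by
  have : gradient f = (toDual ℝ E).symm ∘ fderiv ℝ f := rfl
  rw [this]
  exact ((toDual ℝ E).symm.contDiff.contDiffAt.comp x (hf.fderiv_right one_add_one_eq_two.le)
    ).differentiableAt one_ne_zero |>.hasFDerivAt

theorem ConvexOn.isPositive_fderiv_gradient (hs : IsOpen s) (hf : ConvexOn ℝ s f)
    (hf₂ : ContDiffOn ℝ 2 f s) (hx : x ∈ s) :
    (fderiv ℝ (gradient f) x : E →ₗ[ℝ] E).IsPositive := by
  have hfx := hf₂.contDiffAt (hs.mem_nhds hx)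
  have hmono := hf.isMonotoneOperatorOn_gradient fun y hy ↦
    (hf₂.contDiffAt (hs.mem_nhds hy)).differentiableAt two_ne_zero
  exact ⟨hfx.isSymmetric_fderiv_gradient,
    hmono.inner_apply_self_nonneg hs hx hfx.hasFDerivAt_gradient⟩

theorem ConvexOn.det_fderiv_gradient_eq_zero_of_gradient_eq [FiniteDimensional ℝ E]
    (hs : IsOpen s) (hf : ConvexOn ℝ s f) (hf₂ : ContDiffOn ℝ 2 f s) {y : E} (hx : x ∈ s)
    (hy : y ∈ s) (hxy : x ≠ y) (hgrad : gradient f x = gradient f y) :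
    (fderiv ℝ (gradient f) x).det = 0 := by
  have hmono := hf.isMonotoneOperatorOn_gradient fun y hy ↦
    (hf₂.contDiffAt (hs.mem_nhds hy)).differentiableAt two_ne_zero
  exact (hf.isPositive_fderiv_gradient hs hf₂ hx).det_eq_zero_of_inner_self_eq_zero
    (sub_ne_zero.2 hxy.symm) (hmono.inner_apply_sub_self_eq_zero hf.1 hx hy hgrad
      (hf₂.contDiffAt (hs.mem_nhds hx)).hasFDerivAt_gradient)

end Gradient

section AreaFormula

variable {E : Type*} [NormedAddCommGroup E] [NormedSpace ℝ E] [FiniteDimensional ℝ E]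
  [MeasurableSpace E] [BorelSpace E] (μ : Measure E) [μ.IsAddHaarMeasure]
  {f : E → E} {f' : E → E →L[ℝ] E} {s : Set E}

theorem lintegral_abs_det_fderiv_eq_addHaar_image_of_injOn_det_ne_zero (hs : MeasurableSet s)
    (hf' : ∀ x ∈ s, HasFDerivWithinAt f (f' x) s x) (hf'_meas : Measurable f')
    (hinj : InjOn f {x ∈ s | (f' x).det ≠ 0}) :
    ∫⁻ x in s, ENNReal.ofReal |(f' x).det| ∂μ = μ (f '' s) := by
  set Z := {x | (f' x).det = 0}
  have hZ : MeasurableSet Z :=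
    ContinuousLinearMap.continuous_det.measurable.comp hf'_meas (measurableSet_singleton 0)
  have hcrit : μ (f '' (s ∩ Z)) = 0 :=
    addHaar_image_eq_zero_of_det_fderivWithin_eq_zero μ
      (fun x hx ↦ (hf' x hx.1).mono inter_subset_left) fun x hx ↦ hx.2
  have hcrit_int : ∫⁻ x in s ∩ Z, ENNReal.ofReal |(f' x).det| ∂μ = 0 :=
    setLIntegral_eq_zero (hs.inter hZ) fun x hx ↦ by simp [hx.2.out]
  have hregular : ∫⁻ x in s \ Z, ENNReal.ofReal |(f' x).det| ∂μ = μ (f '' (s \ Z)) :=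
    lintegral_abs_det_fderiv_eq_addHaar_image μ (hs.diff hZ)
      (fun x hx ↦ (hf' x hx.1).mono sdiff_subset) hinj
  calc ∫⁻ x in s, ENNReal.ofReal |(f' x).det| ∂μ
      = ∫⁻ x in s \ Z, ENNReal.ofReal |(f' x).det| ∂μ := by
        rw [← sdiff_union_inter s Z, lintegral_union (hs.inter hZ) disjoint_sdiff_inter,
          hcrit_int, add_zero, sdiff_union_inter]
    _ = μ (f '' (s \ Z)) := hregular
    _ = μ (f '' s) := by
        refine le_antisymm (measure_mono (image_mono sdiff_subset)) ?_
        calc μ (f '' s) = μ (f '' (s \ Z) ∪ f '' (s ∩ Z)) := by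
              rw [← image_union, sdiff_union_inter]
          _ ≤ μ (f '' (s \ Z)) + μ (f '' (s ∩ Z)) := measure_union_le _ _
          _ = μ (f '' (s \ Z)) := by rw [hcrit, add_zero]

end AreaFormula

/-- For a `C²` convex function `z` on an open set `G ⊆ ℝⁿ`, the Lebesgue
measure of the gradient image of a Borel set `m ⊆ G` equals the integral over
`m` of the Hessian determinant of `z` (the Jacobian determinant of `∇z`). -/
theorem mongeAmpere_measure_of_smooth {n : ℕ}
    (G : Set (EuclideanSpace ℝ (Fin n))) (hGo : IsOpen G)
    (z : EuclideanSpace ℝ (Fin n) → ℝ)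
    (hz : ContDiffOn ℝ 2 z G) (hconv : ConvexOn ℝ G z)
    (m : Set (EuclideanSpace ℝ (Fin n))) (hm : MeasurableSet m) (hmG : m ⊆ G) :
    volume (gradient z '' m) =
      ∫⁻ x in m, ENNReal.ofReal ((fderiv ℝ (gradient z) x).det) := by
  have hdet_nonneg (x) (hx : x ∈ m) : 0 ≤ (fderiv ℝ (gradient z) x).det :=
    (hconv.isPositive_fderiv_gradient hGo hz (hmG hx)).det_nonneg
  rw [← lintegral_abs_det_fderiv_eq_addHaar_image_of_injOn_det_ne_zero volume hm
    (fun x hx ↦ (hz.contDiffAt (hGo.mem_nhds (hmG hx))).hasFDerivAt_gradient.hasFDerivWithinAt)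
    (measurable_fderiv ℝ _)]
  · exact setLIntegral_congr_fun hm fun x hx ↦ by rw [abs_of_nonneg (hdet_nonneg x hx)]
  · intro x hx y hy hxy
    by_contra hne
    exact hx.2 (hconv.det_fderiv_gradient_eq_zero_of_gradient_eq hGo hz (hmG hx.1) (hmG hy.1)
      hne hxy)
end

section
/- The set of p ∈ ℝⁿ that are subgradients of a convex function z : G → ℝ at more than one point of G has Lebesgue measure zero. -/
open MeasureTheory

/-- The subdifferential of a convex function `z` on `G` at `x`. -/
def subgrad {n : ℕ} (z : EuclideanSpace ℝ (Fin n) → ℝ)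
    (G : Set (EuclideanSpace ℝ (Fin n))) (x : EuclideanSpace ℝ (Fin n)) :
    Set (EuclideanSpace ℝ (Fin n)) :=
  {p | ∀ y ∈ G, z x + (inner ℝ p (y - x) : ℝ) ≤ z y}

/-!
If `p` is a subgradient of `z` at `x` relative to a set `K`, then `x` maximises `⟪p, x⟫ - z x`
over `K`, so the conjugate `z*_K p = sup_{x ∈ K} (⟪p, x⟫ - z x)` minus the linear map `⟪x, ·⟫` is
minimised at `p`; wherever `z*_K` is differentiable at `p`, its derivative there is therefore `x`,
and `x` is unique. When `K` is bounded and `z` is bounded below on `K`, the conjugate is finite and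
Lipschitz, hence differentiable almost everywhere by Rademacher's theorem. Exhausting `G` by the
countably many sets `{x ∈ G | ‖x‖ ≤ m, -m ≤ z x}` gives the theorem.
-/

open Set
open scoped NNReal RealInnerProductSpace

section Conjugate

variable {E : Type*} [NormedAddCommGroup E] [InnerProductSpace ℝ E]

def IsSubgradientOn (z : E → ℝ) (K : Set E) (x p : E) : Prop :=
  ∀ y ∈ K, z x + ⟪p, y - x⟫ ≤ z y

lemma IsSubgradientOn.mono {z : E → ℝ} {K G : Set E} {x p : E} (h : IsSubgradientOn z G x p)
    (hKG : K ⊆ G) : IsSubgradientOn z K x p :=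
  fun y hy => h y (hKG hy)

/-- `⨆` returns the junk value `0` when the family is not bounded above; see
`bddAbove_range_inner_sub`. -/
noncomputable def conjOn (z : E → ℝ) (K : Set E) (p : E) : ℝ :=
  ⨆ x : K, ⟪p, (x : E)⟫ - z x

variable {z : E → ℝ} {K : Set E} {R : ℝ≥0}

lemma bddAbove_range_inner_sub (hK : ∀ x ∈ K, ‖x‖ ≤ R) (hz : BddBelow (z '' K)) (p : E) :
    BddAbove (range fun x : K => ⟪p, (x : E)⟫ - z x) := by
  obtain ⟨c, hc⟩ := hz
  refine ⟨‖p‖ * R - c, ?_⟩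
  rintro _ ⟨⟨x, hx⟩, rfl⟩
  have hzx : c ≤ z x := hc (mem_image_of_mem z hx)
  have hpx : ⟪p, x⟫ ≤ ‖p‖ * R :=
    (real_inner_le_norm p x).trans (mul_le_mul_of_nonneg_left (hK x hx) (norm_nonneg p))
  dsimp only
  linarith

lemma le_conjOn (hK : ∀ x ∈ K, ‖x‖ ≤ R) (hz : BddBelow (z '' K)) {x : E} (hx : x ∈ K) (p : E) :
    ⟪p, x⟫ - z x ≤ conjOn z K p :=
  le_ciSup (bddAbove_range_inner_sub hK hz p) ⟨x, hx⟩

lemma lipschitzWith_conjOn (hK : ∀ x ∈ K, ‖x‖ ≤ R) (hz : BddBelow (z '' K)) :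
    LipschitzWith R (conjOn z K) := by
  refine LipschitzWith.of_le_add_mul R fun p q => ?_
  rcases isEmpty_or_nonempty K with hKe | hKne
  · simp only [conjOn, Real.iSup_of_isEmpty, zero_add]
    positivity
  refine ciSup_le fun ⟨x, hx⟩ => ?_
  have hpq : ⟪p - q, x⟫ ≤ R * dist p q := by
    rw [dist_eq_norm, mul_comm]
    exact (real_inner_le_norm _ _).trans (mul_le_mul_of_nonneg_left (hK x hx) (norm_nonneg _))
  calc ⟪p, x⟫ - z x = (⟪q, x⟫ - z x) + ⟪p - q, x⟫ := by rw [inner_sub_left]; ring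
    _ ≤ conjOn z K q + R * dist p q := add_le_add (le_conjOn hK hz hx q) hpq

lemma conjOn_eq_of_isSubgradientOn {x p : E} (hx : x ∈ K) (hp : IsSubgradientOn z K x p) :
    conjOn z K p = ⟪p, x⟫ - z x := by
  have : Nonempty K := ⟨⟨x, hx⟩⟩
  have hmax : ∀ y : K, ⟪p, (y : E)⟫ - z y ≤ ⟪p, x⟫ - z x := fun ⟨y, hy⟩ => by
    have := hp y hy
    rw [inner_sub_right] at this
    linarith
  exact le_antisymm (ciSup_le hmax) (le_ciSup ⟨_, forall_mem_range.2 hmax⟩ ⟨x, hx⟩)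

lemma fderiv_conjOn_of_isSubgradientOn (hK : ∀ x ∈ K, ‖x‖ ≤ R) (hz : BddBelow (z '' K)) {x p : E}
    (hx : x ∈ K) (hp : IsSubgradientOn z K x p) (hdiff : DifferentiableAt ℝ (conjOn z K) p) :
    fderiv ℝ (conjOn z K) p = innerSL ℝ x := by
  have hmin : IsLocalMin (fun q => conjOn z K q - innerSL ℝ x q) p := by
    refine (isMinOn_univ_iff.2 fun q => ?_).isLocalMin Filter.univ_mem
    have := le_conjOn hK hz hx q
    simp only [innerSL_apply_apply, conjOn_eq_of_isSubgradientOn hx hp, real_inner_comm x] at this ⊢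
    linarith
  exact sub_eq_zero.1 (hmin.hasFDerivAt_eq_zero (hdiff.hasFDerivAt.sub (innerSL ℝ x).hasFDerivAt))

lemma eq_of_isSubgradientOn_of_differentiableAt (hK : ∀ x ∈ K, ‖x‖ ≤ R) (hz : BddBelow (z '' K))
    {x₁ x₂ p : E} (hx₁ : x₁ ∈ K) (hx₂ : x₂ ∈ K) (hp₁ : IsSubgradientOn z K x₁ p)
    (hp₂ : IsSubgradientOn z K x₂ p) (hdiff : DifferentiableAt ℝ (conjOn z K) p) : x₁ = x₂ := by
  have h := (fderiv_conjOn_of_isSubgradientOn hK hz hx₁ hp₁ hdiff).symm.trans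
    (fderiv_conjOn_of_isSubgradientOn hK hz hx₂ hp₂ hdiff)
  exact ext_inner_right ℝ fun v => by simpa using DFunLike.congr_fun h v

theorem measure_setOf_isSubgradientOn_two_points_eq_zero [FiniteDimensional ℝ E]
    [MeasurableSpace E] [BorelSpace E] (μ : Measure E) [μ.IsAddHaarMeasure]
    (hK : ∀ x ∈ K, ‖x‖ ≤ R) (hz : BddBelow (z '' K)) :
    μ {p | ∃ x₁ ∈ K, ∃ x₂ ∈ K, x₁ ≠ x₂ ∧ IsSubgradientOn z K x₁ p ∧ IsSubgradientOn z K x₂ p} = 0 := by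
  refine measure_mono_null ?_ (ae_iff.1 ((lipschitzWith_conjOn hK hz).ae_differentiableAt (μ := μ)))
  rintro p ⟨x₁, hx₁, x₂, hx₂, hne, hp₁, hp₂⟩ hdiff
  exact hne (eq_of_isSubgradientOn_of_differentiableAt hK hz hx₁ hx₂ hp₁ hp₂ hdiff)

end Conjugate

theorem subgradients_at_two_points_null_general {n : ℕ}
    (G : Set (EuclideanSpace ℝ (Fin n)))
    (z : EuclideanSpace ℝ (Fin n) → ℝ) :
    volume {p : EuclideanSpace ℝ (Fin n) |
      ∃ x₁ ∈ G, ∃ x₂ ∈ G, x₁ ≠ x₂ ∧ p ∈ subgrad z G x₁ ∧ p ∈ subgrad z G x₂} = 0 := by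
  let K : ℕ → Set (EuclideanSpace ℝ (Fin n)) := fun m => {x ∈ G | ‖x‖ ≤ m ∧ -(m : ℝ) ≤ z x}
  have hKG (m : ℕ) : K m ⊆ G := fun _ hx => hx.1
  have hKz (m : ℕ) : BddBelow (z '' K m) := ⟨-m, by rintro _ ⟨x, hx, rfl⟩; exact hx.2.2⟩
  refine measure_mono_null ?_ (measure_iUnion_null fun m : ℕ =>
    measure_setOf_isSubgradientOn_two_points_eq_zero (R := m) volume
      (fun x hx => by exact_mod_cast hx.2.1) (hKz m))
  rintro p ⟨x₁, hx₁, x₂, hx₂, hne, hp₁, hp₂⟩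
  obtain ⟨m, hm⟩ := exists_nat_ge (max (max ‖x₁‖ (-z x₁)) (max ‖x₂‖ (-z x₂)))
  obtain ⟨⟨hx₁n, hx₁z⟩, hx₂n, hx₂z⟩ := by simpa only [max_le_iff] using hm
  refine mem_iUnion.2 ⟨m, x₁, ⟨hx₁, hx₁n, by linarith⟩, x₂, ⟨hx₂, hx₂n, by linarith⟩, hne,
    IsSubgradientOn.mono hp₁ (hKG m), IsSubgradientOn.mono hp₂ (hKG m)⟩

/-- The set of `p` that are subgradients of a convex function `z` at more than
one point of `G` has Lebesgue measure zero. -/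
theorem subgradients_at_two_points_null {n : ℕ}
    (G : Set (EuclideanSpace ℝ (Fin n))) (hGo : IsOpen G) (hGc : Convex ℝ G)
    (z : EuclideanSpace ℝ (Fin n) → ℝ) (hz : ConvexOn ℝ G z) :
    volume {p : EuclideanSpace ℝ (Fin n) |
      ∃ x₁ ∈ G, ∃ x₂ ∈ G, x₁ ≠ x₂ ∧ p ∈ subgrad z G x₁ ∧ p ∈ subgrad z G x₂} = 0 :=
  subgradients_at_two_points_null_general G z
end

section
/- Weak continuity of the Monge–Ampère measure: if convex functions uₙ on an open convex set G ⊆ ℝⁿ converge locally uniformly to a convex function u, then the Monge–Ampère measures of uₙ converge weakly to the Monge–Ampère measure of u (i.e., for every compact K ⊆ G, limsup λ(∂uₙ(K)) ≤ λ(∂u(K)), and for every open U with compact closure in G, liminf λ(∂uₙ(U)) ≥ λ(∂u(U))). -/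
/-!
For a compact `K ⊆ G`, the `uₖ` are eventually uniformly bounded on a `δ`-neighbourhood of `K`,
which bounds their subgradients at points of `K`; so the sets `∂uₖ(K)` eventually lie in a fixed
ball. Subgradient inequalities pass to the limit along convergent subsequences, hence
`limsup ∂uₖ(K) ⊆ ∂u(K)`, and the reverse Fatou lemma for sets of finite measure gives the first
inequality.

For an open `U`, `p ∈ ∂u(x₀)` means that `x₀` minimises `u - ⟪p, ·⟫` on `G`. Limits of minimisers
of `uₖ - ⟪p, ·⟫` over `closure U` minimise `u - ⟪p, ·⟫` there; if that minimiser is unique and lies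
in `U`, the minimisers of `uₖ - ⟪p, ·⟫` eventually lie in `U`, where convexity makes them global
minimisers on `G`, i.e. `p ∈ ∂uₖ(U)`. Uniqueness holds wherever the Legendre transform of `u`
restricted to `closure U` is differentiable, its gradient being the minimiser. That transform is
Lipschitz, so by Rademacher's theorem `∂u(U) ⊆ liminf ∂uₖ(U)` up to a null set, and Fatou's lemma
for sets gives the second inequality.
-/

open MeasureTheory

/-- The subgradient image `∂z(m) = ⋃_{x ∈ m} ∂z(x)`. -/
def subgradImage {n : ℕ} (z : EuclideanSpace ℝ (Fin n) → ℝ)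
    (G m : Set (EuclideanSpace ℝ (Fin n))) : Set (EuclideanSpace ℝ (Fin n)) :=
  ⋃ x ∈ m, subgrad z G x

open Filter Metric Set
open scoped Topology ENNReal RealInnerProductSpace

theorem tendstoLocallyUniformlyOn_const {α β ι : Type*} [TopologicalSpace α] [UniformSpace β]
    (f : α → β) (p : Filter ι) (s : Set α) :
    TendstoLocallyUniformlyOn (fun _ : ι => f) f p s := fun _ hv _ _ =>
  ⟨s, self_mem_nhdsWithin, Eventually.of_forall fun _ _ _ => refl_mem_uniformity hv⟩

theorem TendstoLocallyUniformlyOn.comp_tendsto {α β ι ι' : Type*} [TopologicalSpace α]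
    [UniformSpace β] {F : ι → α → β} {f : α → β} {p : Filter ι} {s : Set α}
    (h : TendstoLocallyUniformlyOn F f p s) {p' : Filter ι'} {φ : ι' → ι}
    (hφ : Tendsto φ p' p) : TendstoLocallyUniformlyOn (fun i => F (φ i)) f p' s := fun v hv x hx =>
  let ⟨t, ht, hev⟩ := h v hv x hx
  ⟨t, ht, hφ.eventually hev⟩

theorem IsMinOn.of_tendstoLocallyUniformlyOn {α ι : Type*} [TopologicalSpace α]
    {l : Filter ι} [l.NeBot] {F : ι → α → ℝ} {f : α → ℝ} {s : Set α}
    (hF : TendstoLocallyUniformlyOn F f l s) (hf : ContinuousOn f s) {x : ι → α} {a : α}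
    (ha : a ∈ s) (hx : Tendsto x l (𝓝[s] a))
    (hmin : ∀ i, IsMinOn (F i) s (x i)) : IsMinOn f s a := fun _ hy =>
  le_of_tendsto_of_tendsto' (hF.tendsto_comp (hf a ha) ha hx) (hF.tendsto_at hy) fun i => hmin i hy

section Fatou

variable {α : Type*} [MeasurableSpace α] (μ : Measure α)

theorem measure_liminf_le_liminf_measure (s : ℕ → Set α) :
    μ (liminf s atTop) ≤ liminf (fun k => μ (s k)) atTop := by
  have hmono : Monotone fun N => ⋂ k ≥ N, s k :=
    fun N N' hN => biInter_mono (fun k hk => hN.trans hk) fun _ _ => le_rfl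
  simp only [liminf_eq_iSup_iInf_of_nat, iSup_eq_iUnion, iInf_eq_iInter]
  rw [hmono.measure_iUnion]
  exact iSup_mono fun N => le_iInf₂ fun k hk => measure_mono (biInter_subset_of_mem hk)

theorem limsup_measure_le_measure_limsup {s : ℕ → Set α}
    (hs : ∀ k, NullMeasurableSet (s k) μ) {t : Set α} (ht : μ t ≠ ∞)
    (hst : ∀ᶠ k in atTop, s k ⊆ t) :
    limsup (fun k => μ (s k)) atTop ≤ μ (limsup s atTop) := by
  have hanti : Antitone fun N => ⋃ k ≥ N, s k :=
    fun N N' hN => biUnion_mono (fun k hk => hN.trans hk) fun _ _ => le_rfl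
  obtain ⟨N₀, hN₀⟩ := eventually_atTop.1 hst
  have hfin : μ (⋃ k ≥ N₀, s k) ≠ ∞ :=
    ne_top_of_le_ne_top ht (measure_mono (iUnion₂_subset hN₀))
  simp only [limsup_eq_iInf_iSup_of_nat, iSup_eq_iUnion, iInf_eq_iInter]
  rw [hanti.measure_iInter (fun N => .biUnion (to_countable _) fun k _ => hs k) ⟨N₀, hfin⟩]
  exact iInf_mono fun N => iSup₂_le fun k hk => measure_mono (subset_biUnion_of_mem hk)

end Fatou

section Legendre

variable {E : Type*} [NormedAddCommGroup E] [InnerProductSpace ℝ E] {z : E → ℝ} {C : Set E}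

-- A junk value unless `C` is nonempty and `⟪p, ·⟫ - z` is bounded above on `C`.
noncomputable def legendreOn (z : E → ℝ) (C : Set E) (p : E) : ℝ :=
  sSup ((fun x => ⟪p, x⟫ - z x) '' C)

theorem inner_sub_le_legendreOn (hC : IsCompact C) (hz : ContinuousOn z C) {x : E} (hx : x ∈ C)
    (p : E) : ⟪p, x⟫ - z x ≤ legendreOn z C p :=
  le_csSup (hC.image_of_continuousOn
    ((continuous_const.inner continuous_id).continuousOn.sub hz)).bddAbove (mem_image_of_mem _ hx)

theorem legendreOn_le (hC : C.Nonempty) {p : E} {a : ℝ}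
    (h : ∀ x ∈ C, ⟪p, x⟫ - z x ≤ a) : legendreOn z C p ≤ a :=
  csSup_le (hC.image _) (forall_mem_image.2 h)

theorem lipschitzWith_legendreOn (hC : IsCompact C) (hz : ContinuousOn z C) {R : ℝ}
    (hR : ∀ x ∈ C, ‖x‖ ≤ R) : LipschitzWith R.toNNReal (legendreOn z C) := by
  rcases C.eq_empty_or_nonempty with rfl | hne
  · convert LipschitzWith.const' (α := E) (0 : ℝ)
    simp [legendreOn]
  refine LipschitzWith.of_le_add_mul' R fun p q => legendreOn_le hne fun x hx => ?_
  have hpq : ⟪p - q, x⟫ ≤ R * dist p q := by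
    rw [dist_eq_norm, mul_comm]
    exact (real_inner_le_norm _ _).trans (mul_le_mul_of_nonneg_left (hR x hx) (norm_nonneg _))
  have hq := inner_sub_le_legendreOn hC hz hx q
  rw [inner_sub_left] at hpq
  linarith

theorem fderiv_legendreOn_eq_innerSL (hC : IsCompact C) (hz : ContinuousOn z C) {p x : E}
    (hx : x ∈ C) (hmin : IsMinOn (fun y => z y - ⟪p, y⟫) C x)
    (hdiff : DifferentiableAt ℝ (legendreOn z C) p) :
    fderiv ℝ (legendreOn z C) p = innerSL ℝ x := by
  have hval : legendreOn z C p = ⟪p, x⟫ - z x := by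
    refine le_antisymm (legendreOn_le ⟨x, hx⟩ fun y hy => ?_) (inner_sub_le_legendreOn hC hz hx p)
    linarith [isMinOn_iff.1 hmin y hy]
  -- `legendreOn z C` lies above the affine function `q ↦ ⟪q, x⟫ - z x`, touching it at `p`
  have hlocmin : IsLocalMin (fun q => legendreOn z C q - innerSL ℝ x q) p :=
    Eventually.of_forall fun q => by
      have := inner_sub_le_legendreOn hC hz hx q
      simp only [innerSL_apply_apply, hval]
      linarith [real_inner_comm x q, real_inner_comm x p]
  exact sub_eq_zero.1 <|
    hlocmin.hasFDerivAt_eq_zero (hdiff.hasFDerivAt.sub (innerSL ℝ x).hasFDerivAt)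

theorem eq_of_isMinOn_of_differentiableAt_legendreOn (hC : IsCompact C) (hz : ContinuousOn z C)
    {p x₁ x₂ : E} (hdiff : DifferentiableAt ℝ (legendreOn z C) p)
    (hx₁ : x₁ ∈ C) (hmin₁ : IsMinOn (fun y => z y - ⟪p, y⟫) C x₁)
    (hx₂ : x₂ ∈ C) (hmin₂ : IsMinOn (fun y => z y - ⟪p, y⟫) C x₂) : x₁ = x₂ := by
  have h := (fderiv_legendreOn_eq_innerSL hC hz hx₁ hmin₁ hdiff).symm.trans
    (fderiv_legendreOn_eq_innerSL hC hz hx₂ hmin₂ hdiff)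
  exact ext_inner_right ℝ fun v => by simpa using congrArg (fun L => L v) h

end Legendre

section Subdifferential

variable {n : ℕ} {G : Set (EuclideanSpace ℝ (Fin n))}
  {u : ℕ → EuclideanSpace ℝ (Fin n) → ℝ} {ulim : EuclideanSpace ℝ (Fin n) → ℝ}

local notation "E" => EuclideanSpace ℝ (Fin n)

theorem mem_subgrad_iff_isMinOn {z : E → ℝ} {x p : E} :
    p ∈ subgrad z G x ↔ IsMinOn (fun y => z y - ⟪p, y⟫) G x := by
  simp only [subgrad, isMinOn_iff, mem_ofPred_eq, inner_sub_right]
  exact forall₂_congr fun y _ => by constructor <;> intro h <;> linarith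

@[simp]
theorem mem_subgradImage {z : E → ℝ} {m : Set E} {p : E} :
    p ∈ subgradImage z G m ↔ ∃ x ∈ m, p ∈ subgrad z G x := by
  simp [subgradImage]

theorem norm_le_of_mem_subgrad {z : E → ℝ} {x p : E} {δ M : ℝ} (hδ : 0 < δ)
    (hball : closedBall x δ ⊆ G) (hM : ∀ y ∈ closedBall x δ, |z y| ≤ M)
    (hp : p ∈ subgrad z G x) : ‖p‖ ≤ 2 * M / δ := by
  set y := x + (δ / ‖p‖) • p
  have hy : y ∈ closedBall x δ := by
    rw [mem_closedBall, dist_eq_norm, add_sub_cancel_left, norm_smul, Real.norm_eq_abs,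
      abs_of_nonneg (by positivity)]
    rcases (norm_nonneg p).eq_or_lt with h | h
    · simp [← h, hδ.le]
    · rw [div_mul_cancel₀ _ h.ne']
  have hinner : ⟪p, y - x⟫ = δ * ‖p‖ := by
    rw [add_sub_cancel_left, real_inner_smul_right, real_inner_self_eq_norm_sq]
    rcases (norm_nonneg p).eq_or_lt with h | h
    · simp [← h]
    · field_simp
  have hzy := hp y (hball hy)
  have hMx := abs_le.1 (hM x (mem_closedBall_self hδ.le))
  have hMy := abs_le.1 (hM y hy)
  rw [le_div_iff₀ hδ]
  linarith

theorem subgradImage_subset_closedBall {z : E → ℝ} {K : Set E} {δ M : ℝ} (hδ : 0 < δ)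
    (hKG : cthickening δ K ⊆ G) (hM : ∀ y ∈ cthickening δ K, |z y| ≤ M) :
    subgradImage z G K ⊆ closedBall 0 (2 * M / δ) := by
  intro p hp
  obtain ⟨x, hxK, hpx⟩ := mem_subgradImage.1 hp
  have hball : closedBall x δ ⊆ cthickening δ K := closedBall_subset_cthickening hxK δ
  exact mem_closedBall_zero_iff.2 <|
    norm_le_of_mem_subgrad hδ (hball.trans hKG) (fun y hy => hM y (hball hy)) hpx

theorem mem_subgradImage_of_tendsto {K : Set E}
    (hcont : ContinuousOn ulim G) (hunif : TendstoLocallyUniformlyOn u ulim atTop G)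
    (hK : IsCompact K) (hKG : K ⊆ G) {p : ℕ → E} {q : E} (hpq : Tendsto p atTop (𝓝 q))
    (hp : ∀ k, p k ∈ subgradImage (u k) G K) : q ∈ subgradImage ulim G K := by
  choose x hxK hx using fun k => mem_subgradImage.1 (hp k)
  obtain ⟨x₀, hx₀, ψ, hψ, hxψ⟩ := hK.tendsto_subseq hxK
  refine mem_subgradImage.2 ⟨x₀, hx₀, fun y hy => ?_⟩
  have hux : Tendsto (fun j => u (ψ j) (x (ψ j))) atTop (𝓝 (ulim x₀)) :=
    (hunif.comp_tendsto hψ.tendsto_atTop).tendsto_comp (hcont x₀ (hKG hx₀)) (hKG hx₀)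
      (tendsto_nhdsWithin_iff.2 ⟨hxψ, Eventually.of_forall fun j => hKG (hxK _)⟩)
  have huy : Tendsto (fun j => u (ψ j) y) atTop (𝓝 (ulim y)) :=
    (hunif.tendsto_at hy).comp hψ.tendsto_atTop
  have hinner : Tendsto (fun j => ⟪p (ψ j), y - x (ψ j)⟫) atTop (𝓝 ⟪q, y - x₀⟫) :=
    (hpq.comp hψ.tendsto_atTop).inner (tendsto_const_nhds.sub hxψ)
  exact le_of_tendsto_of_tendsto' (hux.add hinner) huy fun j => hx (ψ j) y hy

theorem isClosed_subgradImage {z : E → ℝ} {K : Set E} (hz : ContinuousOn z G)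
    (hK : IsCompact K) (hKG : K ⊆ G) : IsClosed (subgradImage z G K) :=
  IsSeqClosed.isClosed fun _ _ hp hpq =>
    mem_subgradImage_of_tendsto hz (tendstoLocallyUniformlyOn_const z atTop G) hK hKG hpq hp

theorem limsup_subgradImage_subset (hcont : ContinuousOn ulim G)
    (hunif : TendstoLocallyUniformlyOn u ulim atTop G) {K : Set E} (hK : IsCompact K)
    (hKG : K ⊆ G) : limsup (fun k => subgradImage (u k) G K) atTop ⊆ subgradImage ulim G K := by
  intro p hp
  obtain ⟨φ, hφ, hpφ⟩ := extraction_of_frequently_atTop (mem_limsup_iff_frequently_mem.1 hp)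
  exact mem_subgradImage_of_tendsto hcont (hunif.comp_tendsto hφ.tendsto_atTop) hK hKG
    tendsto_const_nhds hpφ

theorem eventually_subgradImage_subset_closedBall (hGo : IsOpen G) (hcont : ContinuousOn ulim G)
    (hunif : TendstoLocallyUniformlyOn u ulim atTop G) {K : Set E} (hK : IsCompact K)
    (hKG : K ⊆ G) : ∃ R, ∀ᶠ k in atTop, subgradImage (u k) G K ⊆ closedBall 0 R := by
  obtain ⟨δ, hδ, hKδ⟩ := hK.exists_cthickening_subset_open hGo hKG
  obtain ⟨M, hM⟩ := hK.cthickening.exists_bound_of_continuousOn (hcont.mono hKδ)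
  have hclose := Metric.tendstoUniformlyOn_iff.1
    ((tendstoLocallyUniformlyOn_iff_forall_isCompact hGo).1 hunif _ hKδ hK.cthickening) 1 one_pos
  refine ⟨2 * (M + 1) / δ, hclose.mono fun k hk => subgradImage_subset_closedBall hδ hKδ
    fun y hy => ?_⟩
  have h₁ := hM y hy
  have h₂ := hk y hy
  rw [Real.norm_eq_abs] at h₁
  rw [Real.dist_eq] at h₂
  linarith [abs_sub_abs_le_abs_sub (u k y) (ulim y), abs_sub_comm (ulim y) (u k y)]

theorem limsup_volume_subgradImage_le (hGo : IsOpen G) (hcontk : ∀ k, ContinuousOn (u k) G)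
    (hcont : ContinuousOn ulim G) (hunif : TendstoLocallyUniformlyOn u ulim atTop G)
    {K : Set E} (hK : IsCompact K) (hKG : K ⊆ G) :
    limsup (fun k => volume (subgradImage (u k) G K)) atTop ≤ volume (subgradImage ulim G K) := by
  obtain ⟨R, hR⟩ := eventually_subgradImage_subset_closedBall hGo hcont hunif hK hKG
  calc limsup (fun k => volume (subgradImage (u k) G K)) atTop
      ≤ volume (limsup (fun k => subgradImage (u k) G K) atTop) :=
        limsup_measure_le_measure_limsup volume
          (fun k => (isClosed_subgradImage (hcontk k) hK hKG).measurableSet.nullMeasurableSet)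
          measure_closedBall_lt_top.ne hR
    _ ≤ volume (subgradImage ulim G K) :=
        measure_mono (limsup_subgradImage_subset hcont hunif hK hKG)

theorem mem_subgrad_of_isMinOn {z : E → ℝ} (hz : ConvexOn ℝ G z) {U : Set E} (hUo : IsOpen U)
    (hUG : U ⊆ G) {p x : E} (hx : x ∈ U) (hmin : IsMinOn (fun y => z y - ⟪p, y⟫) U x) :
    p ∈ subgrad z G x := by
  have hconv : ConvexOn ℝ G fun y => z y - ⟪p, y⟫ := hz.sub ((innerₛₗ ℝ p).concaveOn hz.1)
  refine mem_subgrad_iff_isMinOn.2 (IsMinOn.of_isLocalMinOn_of_convexOn (hUG hx) ?_ hconv)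
  exact mem_of_superset (mem_nhdsWithin_of_mem_nhds (hUo.mem_nhds hx)) hmin

theorem eventually_mem_subgradImage (hGo : IsOpen G) (hconv : ∀ k, ConvexOn ℝ G (u k))
    (hcont : ContinuousOn ulim G) (hunif : TendstoLocallyUniformlyOn u ulim atTop G)
    {U : Set E} (hUo : IsOpen U) (hUG : closure U ⊆ G) (hUc : IsCompact (closure U))
    {p x₀ : E} (hx₀ : x₀ ∈ U) (hp : p ∈ subgrad ulim G x₀)
    (hdiff : DifferentiableAt ℝ (legendreOn ulim (closure U)) p) :
    ∀ᶠ k in atTop, p ∈ subgradImage (u k) G U := by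
  by_contra hcon
  obtain ⟨φ, hφ, hpφ⟩ := extraction_of_frequently_atTop (not_eventually.1 hcon)
  have hinner : Continuous fun y : E => ⟪p, y⟫ := continuous_const.inner continuous_id
  have hmin : ∀ j, ∃ x ∈ closure U, IsMinOn (fun y => u (φ j) y - ⟪p, y⟫) (closure U) x :=
    fun j => hUc.exists_isMinOn ⟨x₀, subset_closure hx₀⟩
      ((((hconv _).continuousOn hGo).mono hUG).sub hinner.continuousOn)
  choose x hxU hxmin using hmin
  have hx_frontier : ∀ j, x j ∈ closure U \ U := fun j =>
    ⟨hxU j, fun hxj => hpφ j <| mem_subgradImage.2 ⟨x j, hxj,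
      mem_subgrad_of_isMinOn (hconv _) hUo (subset_closure.trans hUG) hxj
        ((hxmin j).on_subset subset_closure)⟩⟩
  obtain ⟨xs, hxs, ψ, hψ, hxψ⟩ := (hUc.diff hUo).tendsto_subseq hx_frontier
  have hunif' : TendstoLocallyUniformlyOn (fun j y => u (φ (ψ j)) y - ⟪p, y⟫)
      (fun y => ulim y - ⟪p, y⟫) atTop (closure U) :=
    ((hunif.comp_tendsto (hφ.comp hψ).tendsto_atTop).mono hUG).sub
      (tendstoLocallyUniformlyOn_const _ _ _)
  have hxs_min : IsMinOn (fun y => ulim y - ⟪p, y⟫) (closure U) xs :=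
    IsMinOn.of_tendstoLocallyUniformlyOn hunif'
      ((hcont.mono hUG).sub hinner.continuousOn) hxs.1
      (tendsto_nhdsWithin_iff.2 ⟨hxψ, Eventually.of_forall fun j => hxU _⟩)
      fun j => hxmin (ψ j)
  have hx₀_min : IsMinOn (fun y => ulim y - ⟪p, y⟫) (closure U) x₀ :=
    (mem_subgrad_iff_isMinOn.1 hp).on_subset hUG
  exact hxs.2 (eq_of_isMinOn_of_differentiableAt_legendreOn hUc (hcont.mono hUG) hdiff
    (subset_closure hx₀) hx₀_min hxs.1 hxs_min ▸ hx₀)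

theorem volume_subgradImage_le_liminf (hGo : IsOpen G) (hconv : ∀ k, ConvexOn ℝ G (u k))
    (hcont : ContinuousOn ulim G) (hunif : TendstoLocallyUniformlyOn u ulim atTop G)
    {U : Set E} (hUo : IsOpen U) (hUG : closure U ⊆ G) (hUc : IsCompact (closure U)) :
    volume (subgradImage ulim G U) ≤ liminf (fun k => volume (subgradImage (u k) G U)) atTop := by
  obtain ⟨R, hR⟩ := hUc.isBounded.exists_norm_le
  have hdiff : ∀ᵐ p, DifferentiableAt ℝ (legendreOn ulim (closure U)) p :=
    (lipschitzWith_legendreOn hUc (hcont.mono hUG) hR).ae_differentiableAt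
  calc volume (subgradImage ulim G U)
      ≤ volume (liminf (fun k => subgradImage (u k) G U) atTop) := by
        refine measure_mono_ae (hdiff.mono fun p hp hpU => ?_)
        obtain ⟨x₀, hx₀, hpx₀⟩ := mem_subgradImage.1 hpU
        exact mem_liminf_iff_eventually_mem.2
          (eventually_mem_subgradImage hGo hconv hcont hunif hUo hUG hUc hx₀ hpx₀ hp)
    _ ≤ liminf (fun k => volume (subgradImage (u k) G U)) atTop :=
        measure_liminf_le_liminf_measure volume _

end Subdifferential

theorem mongeAmpere_weak_continuity_general {n : ℕ}
    (G : Set (EuclideanSpace ℝ (Fin n))) (hGo : IsOpen G)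
    (u : ℕ → EuclideanSpace ℝ (Fin n) → ℝ) (ulim : EuclideanSpace ℝ (Fin n) → ℝ)
    (hconv : ∀ k, ConvexOn ℝ G (u k))
    (hunif : TendstoLocallyUniformlyOn (fun k => u k) ulim Filter.atTop G) :
    (∀ K ⊆ G, IsCompact K →
      Filter.limsup (fun k => volume (subgradImage (u k) G K)) Filter.atTop ≤
        volume (subgradImage ulim G K)) ∧
    (∀ U : Set (EuclideanSpace ℝ (Fin n)), IsOpen U → closure U ⊆ G →
      IsCompact (closure U) →
      volume (subgradImage ulim G U) ≤
        Filter.liminf (fun k => volume (subgradImage (u k) G U)) Filter.atTop) := by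
  have hcontk : ∀ k, ContinuousOn (u k) G := fun k => (hconv k).continuousOn hGo
  have hcont : ContinuousOn ulim G := hunif.continuousOn (Frequently.of_forall hcontk)
  exact ⟨fun K hKG hK => limsup_volume_subgradImage_le hGo hcontk hcont hunif hK hKG,
    fun U hUo hUG hUc => volume_subgradImage_le_liminf hGo hconv hcont hunif hUo hUG hUc⟩

/-- Weak continuity of the Monge–Ampère measure: if convex functions `u k`
converge locally uniformly on `G` to a convex function `ulim`, then their
Monge–Ampère measures converge weakly: `limsup` on compacts is dominated, and
`liminf` on open sets with compact closure dominates. -/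
theorem mongeAmpere_weak_continuity {n : ℕ}
    (G : Set (EuclideanSpace ℝ (Fin n))) (hGo : IsOpen G) (hGc : Convex ℝ G)
    (u : ℕ → EuclideanSpace ℝ (Fin n) → ℝ) (ulim : EuclideanSpace ℝ (Fin n) → ℝ)
    (hconv : ∀ k, ConvexOn ℝ G (u k)) (hlimconv : ConvexOn ℝ G ulim)
    (hunif : TendstoLocallyUniformlyOn (fun k => u k) ulim Filter.atTop G) :
    (∀ K ⊆ G, IsCompact K →
      Filter.limsup (fun k => volume (subgradImage (u k) G K)) Filter.atTop ≤
        volume (subgradImage ulim G K)) ∧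
    (∀ U : Set (EuclideanSpace ℝ (Fin n)), IsOpen U → closure U ⊆ G →
      IsCompact (closure U) →
      volume (subgradImage ulim G U) ≤
        Filter.liminf (fun k => volume (subgradImage (u k) G U)) Filter.atTop) :=
  mongeAmpere_weak_continuity_general G hGo u ulim hconv hunif
end
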